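/- arXiv:1411.1535 — 3 statements merged into one kernel-verified Lean document; each statement's English description precedes it below -/
import Mathlib

section
/- For fixed positive real numbers α and u₂,…,u_q, the function z ↦ z · ∂_z log(Path(z,u)) where Path(z,u) = 1/(1-z) + ∑_{j=2}^q (u_j − 1) z^{j−2}, is strictly increasing on (0,1), tends to 0 as z → 0⁺ and to ∞ as z → 1⁻; hence the equation z · ∂_z log(Path(z,u)) = α has a unique solution ζ ∈ (0,1). -/
open Set Filter Topology

/-!
Expanding `1 / (1 - z)` geometrically, `Path(z) = ∑ aₙ zⁿ` with all `aₙ > 0` (`aₙ = u_{n+2}` for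
`n ≤ q - 2`, and `aₙ = 1` beyond), so `g(z) = z Path'(z) / Path(z) = (∑ n aₙ zⁿ) / (∑ aₙ zⁿ)` is the
mean of `n` under the weights `aₙ zⁿ`. For `0 ≤ x < y` the sign of `g(y) - g(x)` is that of
`∑_{n,m} (n - m) aₙ aₘ yⁿ xᵐ = ½ ∑_{n,m} (n - m) aₙ aₘ (yⁿ xᵐ - yᵐ xⁿ)`, a sum of nonnegative terms
whose `(1, 0)` term is positive; truncating the series makes this an inequality between finite
sums that survives the limit. Near `z = 1` the pole gives `g(z) ~ 1 / (1 - z) → ∞`, while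
`g(0) = 0` and `g` is continuous, so the intermediate value theorem produces `ζ`.
-/

theorem natCast_sub_mul_pow_sub_pow_nonneg {x y : ℝ} (hx : 0 ≤ x) (hxy : x ≤ y) (m n : ℕ) :
    0 ≤ ((n : ℝ) - m) * (y ^ n * x ^ m - y ^ m * x ^ n) := by
  wlog hmn : m ≤ n generalizing m n
  · linarith [this n m (by omega)]
  obtain ⟨k, rfl⟩ := Nat.exists_eq_add_of_le hmn
  have hdiff : ((m + k : ℕ) : ℝ) - m = k := by push_cast; ring
  rw [hdiff, show y ^ (m + k) * x ^ m - y ^ m * x ^ (m + k)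
      = x ^ m * y ^ m * (y ^ k - x ^ k) by ring]
  exact mul_nonneg k.cast_nonneg (mul_nonneg (mul_nonneg (pow_nonneg hx m)
    (pow_nonneg (hx.trans hxy) m)) (sub_nonneg.2 (pow_le_pow_left₀ hx hxy k)))

theorem le_two_mul_moment_cross_sub (s : Finset ℕ) {a : ℕ → ℝ} (ha : ∀ n, 0 ≤ a n)
    (h0 : 0 ∈ s) (h1 : 1 ∈ s) {x y : ℝ} (hx : 0 ≤ x) (hxy : x ≤ y) :
    a 0 * a 1 * (y - x) ≤ 2 * ((∑ n ∈ s, n * a n * y ^ n) * (∑ n ∈ s, a n * x ^ n)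
      - (∑ n ∈ s, n * a n * x ^ n) * (∑ n ∈ s, a n * y ^ n)) := by
  set T : ℕ → ℕ → ℝ := fun n m =>
    a n * a m * (((n : ℝ) - m) * (y ^ n * x ^ m - y ^ m * x ^ n))
  have hT : ∀ n m, 0 ≤ T n m := fun n m =>
    mul_nonneg (mul_nonneg (ha n) (ha m)) (natCast_sub_mul_pow_sub_pow_nonneg hx hxy m n)
  -- `T n m` is the `(n, m)`-term of the difference of the two products plus the `(m, n)`-term
  have hsym : 2 * ((∑ n ∈ s, n * a n * y ^ n) * (∑ n ∈ s, a n * x ^ n)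
      - (∑ n ∈ s, n * a n * x ^ n) * (∑ n ∈ s, a n * y ^ n))
      = ∑ n ∈ s, ∑ m ∈ s, T n m := by
    have hB := Finset.sum_comm (s := s) (t := s) (f := fun m n => n * a n * y ^ n * (a m * x ^ m))
    have hC := Finset.sum_comm (s := s) (t := s) (f := fun m n => n * a n * x ^ n * (a m * y ^ m))
    have hexpand : ∀ n m, T n m
        = n * a n * y ^ n * (a m * x ^ m) + m * a m * y ^ m * (a n * x ^ n)
        - n * a n * x ^ n * (a m * y ^ m) - m * a m * x ^ m * (a n * y ^ n) := by
      intro n m; simp only [T]; ring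
    simp only [hexpand, Finset.sum_sub_distrib, Finset.sum_add_distrib, Finset.sum_mul_sum]
    rw [hB, hC]
    linarith
  have hrow : T 1 0 ≤ ∑ m ∈ s, T 1 m := Finset.single_le_sum (fun m _ => hT 1 m) h0
  have hcol : ∑ m ∈ s, T 1 m ≤ ∑ n ∈ s, ∑ m ∈ s, T n m :=
    Finset.single_le_sum (f := fun n => ∑ m ∈ s, T n m)
      (fun n _ => Finset.sum_nonneg fun m _ => hT n m) h1
  have : T 1 0 = a 0 * a 1 * (y - x) := by simp only [T]; push_cast; ring
  linarith

theorem mul_lt_mul_of_hasSum_moments {a : ℕ → ℝ} (ha : ∀ n, 0 ≤ a n) (ha0 : 0 < a 0)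
    (ha1 : 0 < a 1) {x y Ax Ay Bx By : ℝ} (hx : 0 ≤ x) (hxy : x < y)
    (hAx : HasSum (fun n => a n * x ^ n) Ax) (hAy : HasSum (fun n => a n * y ^ n) Ay)
    (hBx : HasSum (fun n => n * a n * x ^ n) Bx) (hBy : HasSum (fun n => n * a n * y ^ n) By) :
    Bx * Ay < By * Ax := by
  have hpartial : Tendsto (fun N => 2 * ((∑ n ∈ Finset.range N, n * a n * y ^ n)
      * (∑ n ∈ Finset.range N, a n * x ^ n) - (∑ n ∈ Finset.range N, n * a n * x ^ n)
      * (∑ n ∈ Finset.range N, a n * y ^ n))) atTop (𝓝 (2 * (By * Ax - Bx * Ay))) :=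
    ((hBy.tendsto_sum_nat.mul hAx.tendsto_sum_nat).sub
      (hBx.tendsto_sum_nat.mul hAy.tendsto_sum_nat)).const_mul 2
  have hbound : a 0 * a 1 * (y - x) ≤ 2 * (By * Ax - Bx * Ay) :=
    ge_of_tendsto hpartial <| eventually_atTop.2 ⟨2, fun N hN =>
      le_two_mul_moment_cross_sub (Finset.range N) ha (Finset.mem_range.2 (by omega))
        (Finset.mem_range.2 (by omega)) hx hxy.le⟩
  linarith [mul_pos (mul_pos ha0 ha1) (sub_pos.2 hxy)]

theorem strictMonoOn_div_of_hasSum_pow {a : ℕ → ℝ} (ha : ∀ n, 0 < a n) {s : Set ℝ}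
    (hs : s ⊆ Ici 0) {A B : ℝ → ℝ} (hA : ∀ z ∈ s, HasSum (fun n => a n * z ^ n) (A z))
    (hB : ∀ z ∈ s, HasSum (fun n => n * a n * z ^ n) (B z)) :
    StrictMonoOn (fun z => B z / A z) s := by
  have hA_pos : ∀ z ∈ s, 0 < A z := fun z hz => by
    have hz0 : 0 ≤ z := hs hz
    have := le_hasSum (hA z hz) 0 fun n _ => mul_nonneg (ha n).le (pow_nonneg hz0 n)
    simp only [pow_zero, mul_one] at this
    exact (ha 0).trans_le this
  intro x hx y hy hxy
  rw [div_lt_div_iff₀ (hA_pos x hx) (hA_pos y hy)]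
  exact mul_lt_mul_of_hasSum_moments (fun n => (ha n).le) (ha 0) (ha 1) (hs hx) hxy
    (hA x hx) (hA y hy) (hB x hx) (hB y hy)

theorem existsUnique_eq_of_strictMonoOn_Ioo {f : ℝ → ℝ} {a b l c : ℝ} (hab : a < b)
    (hf : StrictMonoOn f (Ioo a b)) (hcont : ContinuousOn f (Ioo a b))
    (ha : Tendsto f (𝓝[>] a) (𝓝 l)) (hb : Tendsto f (𝓝[<] b) atTop) (hc : l < c) :
    ∃! x, x ∈ Ioo a b ∧ f x = c := by
  obtain ⟨x₁, hfx₁, hx₁⟩ := ((ha.eventually_lt_const hc).and (Ioo_mem_nhdsGT hab)).exists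
  obtain ⟨x₂, hfx₂, hx₂⟩ := ((hb.eventually_gt_atTop c).and (Ioo_mem_nhdsLT hab)).exists
  have hx₁₂ : x₁ < x₂ := (hf.lt_iff_lt hx₁ hx₂).1 (hfx₁.trans hfx₂)
  have hsub : Icc x₁ x₂ ⊆ Ioo a b := Icc_subset_Ioo hx₁.1 hx₂.2
  obtain ⟨x, hx, hfx⟩ :=
    intermediate_value_Icc hx₁₂.le (hcont.mono hsub) ⟨hfx₁.le, hfx₂.le⟩
  exact ⟨x, ⟨hsub hx, hfx⟩, fun y ⟨hy, hfy⟩ =>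
    hf.injOn hy (hsub hx) (hfy.trans hfx.symm)⟩

theorem hasSum_ite_sum_Icc {M : Type*} [AddCommMonoid M] [TopologicalSpace M] (k q : ℕ)
    (f : ℕ → M) :
    HasSum (fun n => if n + k ≤ q then f (n + k) else 0) (∑ j ∈ Finset.Icc k q, f j) := by
  have hsum : ∑ j ∈ Finset.Icc k q, f j
      = ∑ n ∈ Finset.range (q + 1 - k), if n + k ≤ q then f (n + k) else 0 := by
    rw [← Finset.Ico_add_one_right_eq_Icc, Finset.sum_Ico_eq_sum_range]
    refine Finset.sum_congr rfl fun n hn => ?_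
    rw [Finset.mem_range] at hn
    rw [if_pos (by omega), add_comm]
  rw [hsum]
  exact hasSum_sum_of_ne_finset_zero fun n hn => if_neg (by rw [Finset.mem_range] at hn; omega)

theorem mul_natCast_mul_pow_sub_one {R : Type*} [CommSemiring R] (z : R) (m : ℕ) :
    z * (m * z ^ (m - 1)) = m * z ^ m := by
  rcases m with _ | m
  · simp
  · rw [Nat.add_sub_cancel, pow_succ]; ring

namespace PathSeries

variable (q : ℕ) (u : ℕ → ℝ)

noncomputable def poly (z : ℝ) : ℝ := ∑ j ∈ Finset.Icc 2 q, (u j - 1) * z ^ (j - 2)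

noncomputable def polyDeriv (z : ℝ) : ℝ :=
  ∑ j ∈ Finset.Icc 2 q, (u j - 1) * ((j - 2 : ℕ) * z ^ (j - 2 - 1))

noncomputable def path (z : ℝ) : ℝ := 1 / (1 - z) + poly q u z

noncomputable def pathDeriv (z : ℝ) : ℝ := 1 / (1 - z) ^ 2 + polyDeriv q u z

def coeff (n : ℕ) : ℝ := if n + 2 ≤ q then u (n + 2) else 1

noncomputable def zLogDeriv (z : ℝ) : ℝ := z * pathDeriv q u z / path q u z

theorem continuous_poly : Continuous (poly q u) := by unfold poly; fun_prop

theorem continuous_polyDeriv : Continuous (polyDeriv q u) := by unfold polyDeriv; fun_prop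

variable {q u} {z : ℝ}

theorem coeff_pos (hu : ∀ j ∈ Finset.Icc 2 q, 0 < u j) (n : ℕ) : 0 < coeff q u n := by
  unfold coeff
  split_ifs with h
  · exact hu _ (Finset.mem_Icc.2 ⟨by omega, h⟩)
  · exact one_pos

theorem hasDerivAt_path (hz : z ≠ 1) : HasDerivAt (path q u) (pathDeriv q u z) z := by
  have h1 : 1 - z ≠ 0 := sub_ne_zero.2 hz.symm
  have hgeom : HasDerivAt (fun w => 1 / (1 - w)) (1 / (1 - z) ^ 2) z := by
    simpa [one_div, Pi.inv_def] using ((hasDerivAt_id z).const_sub 1).inv h1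
  have hpoly : HasDerivAt (poly q u) (polyDeriv q u z) z :=
    HasDerivAt.fun_sum fun j _ => (hasDerivAt_pow (j - 2) z).const_mul (u j - 1)
  exact hgeom.add hpoly

theorem continuousAt_pathDeriv (hz : z ≠ 1) : ContinuousAt (pathDeriv q u) z :=
  (continuousAt_const.div ((continuousAt_const.sub continuousAt_id).pow 2)
    (pow_ne_zero 2 (sub_ne_zero.2 hz.symm))).add (continuous_polyDeriv q u).continuousAt

theorem hasSum_coeff_mul_pow (hz : |z| < 1) :
    HasSum (fun n => coeff q u n * z ^ n) (path q u z) := by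
  rw [path, poly, one_div]
  refine ((hasSum_geometric_of_abs_lt_one hz).add
    (hasSum_ite_sum_Icc 2 q fun j => (u j - 1) * z ^ (j - 2))).congr_fun fun n => ?_
  unfold coeff
  split_ifs <;> simp only [Nat.add_sub_cancel, add_zero] <;> ring

theorem hasSum_natCast_mul_coeff_mul_pow (hz : |z| < 1) :
    HasSum (fun n => n * coeff q u n * z ^ n) (z * pathDeriv q u z) := by
  have hval : z * pathDeriv q u z
      = z / (1 - z) ^ 2 + ∑ j ∈ Finset.Icc 2 q, (u j - 1) * ((j - 2 : ℕ) * z ^ (j - 2)) := by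
    rw [pathDeriv, polyDeriv, mul_add, mul_one_div, Finset.mul_sum]
    congr 1
    refine Finset.sum_congr rfl fun j _ => ?_
    rw [mul_left_comm, mul_natCast_mul_pow_sub_one]
  rw [hval]
  refine ((hasSum_coe_mul_geometric_of_norm_lt_one hz).add
    (hasSum_ite_sum_Icc 2 q fun j => (u j - 1) * ((j - 2 : ℕ) * z ^ (j - 2)))).congr_fun
    fun n => ?_
  unfold coeff
  split_ifs <;> simp only [Nat.add_sub_cancel, add_zero] <;> ring

theorem path_pos (hu : ∀ j ∈ Finset.Icc 2 q, 0 < u j) (hz : z ∈ Ico 0 1) :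
    0 < path q u z := by
  have := le_hasSum (hasSum_coeff_mul_pow (q := q) (u := u) ((abs_of_nonneg hz.1).trans_lt hz.2))
    0 fun n _ => mul_nonneg (coeff_pos hu n).le (pow_nonneg hz.1 n)
  simp only [pow_zero, mul_one] at this
  exact (coeff_pos hu 0).trans_le this

theorem mul_deriv_log_path (hu : ∀ j ∈ Finset.Icc 2 q, 0 < u j) (hz : z ∈ Ico 0 1) :
    z * deriv (fun w => Real.log (path q u w)) z = zLogDeriv q u z := by
  rw [((hasDerivAt_path hz.2.ne).log (path_pos hu hz).ne').deriv, zLogDeriv, mul_div_assoc]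

theorem continuousAt_zLogDeriv (hu : ∀ j ∈ Finset.Icc 2 q, 0 < u j) (hz : z ∈ Ico 0 1) :
    ContinuousAt (zLogDeriv q u) z :=
  (continuousAt_id.mul (continuousAt_pathDeriv hz.2.ne)).div
    (hasDerivAt_path hz.2.ne).continuousAt (path_pos hu hz).ne'

theorem continuousOn_zLogDeriv (hu : ∀ j ∈ Finset.Icc 2 q, 0 < u j) :
    ContinuousOn (zLogDeriv q u) (Ico 0 1) :=
  fun _ hz => (continuousAt_zLogDeriv hu hz).continuousWithinAt

theorem strictMonoOn_zLogDeriv (hu : ∀ j ∈ Finset.Icc 2 q, 0 < u j) :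
    StrictMonoOn (zLogDeriv q u) (Ico 0 1) :=
  strictMonoOn_div_of_hasSum_pow (coeff_pos hu) (fun _ hz => hz.1)
    (fun _ hz => hasSum_coeff_mul_pow ((abs_of_nonneg hz.1).trans_lt hz.2))
    (fun _ hz => hasSum_natCast_mul_coeff_mul_pow ((abs_of_nonneg hz.1).trans_lt hz.2))

theorem tendsto_zLogDeriv_zero (hu : ∀ j ∈ Finset.Icc 2 q, 0 < u j) :
    Tendsto (zLogDeriv q u) (𝓝[>] 0) (𝓝 0) := by
  have h := (continuousAt_zLogDeriv hu ⟨le_rfl, zero_lt_one⟩).tendsto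
  rw [zLogDeriv, zero_mul, zero_div] at h
  exact h.mono_left nhdsWithin_le_nhds

theorem tendsto_zLogDeriv_one (hu : ∀ j ∈ Finset.Icc 2 q, 0 < u j) :
    Tendsto (zLogDeriv q u) (𝓝[<] 1) atTop := by
  -- clearing the pole: `zLogDeriv q u z = F z * (1 - z)⁻¹` on `(0, 1)`, where `F 1 = 1`
  set F : ℝ → ℝ := fun z =>
    z * (1 + (1 - z) ^ 2 * polyDeriv q u z) / (1 + (1 - z) * poly q u z)
  have hF : Tendsto F (𝓝[<] 1) (𝓝 1) := by
    have : ContinuousAt F 1 :=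
      ((continuous_id.mul (continuous_const.add (((continuous_const.sub continuous_id).pow 2).mul
        (continuous_polyDeriv q u)))).continuousAt).div
        ((continuous_const.add ((continuous_const.sub continuous_id).mul
          (continuous_poly q u))).continuousAt) (by norm_num)
    simpa [F] using this.tendsto.mono_left nhdsWithin_le_nhds
  have hpole : Tendsto (fun z : ℝ => (1 - z)⁻¹) (𝓝[<] 1) atTop := by
    refine tendsto_inv_nhdsGT_zero.comp (tendsto_nhdsWithin_of_tendsto_nhds_of_eventually_within
      _ ?_ ?_)
    · exact ((continuous_const.sub continuous_id).tendsto' 1 0 (sub_self 1)).mono_left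
        nhdsWithin_le_nhds
    · filter_upwards [self_mem_nhdsWithin] with z hz using sub_pos.2 (mem_Iio.1 hz)
  refine (hF.pos_mul_atTop one_pos hpole).congr' ?_
  filter_upwards [Ioo_mem_nhdsLT zero_lt_one] with z hz
  have h1 : 1 - z ≠ 0 := (sub_pos.2 hz.2).ne'
  have hD : 1 + (1 - z) * poly q u z ≠ 0 := by
    have hpath : (1 - z) * path q u z = 1 + (1 - z) * poly q u z := by
      rw [path]; field_simp
    rw [← hpath]
    exact (mul_pos (sub_pos.2 hz.2) (path_pos hu (Ioo_subset_Ico_self hz))).ne'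
  simp only [F, zLogDeriv, path, pathDeriv]
  field_simp

end PathSeries

open PathSeries in
theorem stmt_6_general (q : ℕ) (u : ℕ → ℝ) (hu : ∀ j ∈ Finset.Icc 2 q, 0 < u j)
    (α : ℝ) (hα : 0 < α) :
    let Path : ℝ → ℝ := fun z =>
      1 / (1 - z) + ∑ j ∈ Finset.Icc 2 q, (u j - 1) * z ^ (j - 2)
    let g : ℝ → ℝ := fun z => z * deriv (fun w => Real.log (Path w)) z
    StrictMonoOn g (Ioo (0 : ℝ) 1) ∧
    Filter.Tendsto g (nhdsWithin 0 (Ioi 0)) (nhds 0) ∧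
    Filter.Tendsto g (nhdsWithin 1 (Iio 1)) Filter.atTop ∧
    ∃! ζ : ℝ, ζ ∈ Ioo (0 : ℝ) 1 ∧ g ζ = α := by
  intro Path g
  have hg : EqOn (zLogDeriv q u) g (Ioo 0 1) := fun z hz =>
    (mul_deriv_log_path hu (Ioo_subset_Ico_self hz)).symm
  have hmono : StrictMonoOn g (Ioo 0 1) :=
    ((strictMonoOn_zLogDeriv hu).mono Ioo_subset_Ico_self).congr hg
  have hcont : ContinuousOn g (Ioo 0 1) :=
    ((continuousOn_zLogDeriv hu).mono Ioo_subset_Ico_self).congr hg.symm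
  have h0 : Tendsto g (𝓝[>] 0) (𝓝 0) :=
    (tendsto_zLogDeriv_zero hu).congr' (hg.eventuallyEq_of_mem (Ioo_mem_nhdsGT zero_lt_one))
  have h1 : Tendsto g (𝓝[<] 1) atTop :=
    (tendsto_zLogDeriv_one hu).congr' (hg.eventuallyEq_of_mem (Ioo_mem_nhdsLT zero_lt_one))
  exact ⟨hmono, h0, h1, existsUnique_eq_of_strictMonoOn_Ioo zero_lt_one hmono hcont h0 h1 hα⟩

/-- For fixed `α > 0` and positive reals `u₂,…,u_q`, the function
`g(z) = z ∂_z log(Path(z,u))` with `Path(z,u) = 1/(1-z) + ∑_{j=2}^q (u_j−1)z^{j−2}`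
is strictly increasing on `(0,1)`, tends to `0` as `z → 0⁺` and to `∞` as `z → 1⁻`;
hence `g(ζ) = α` has a unique solution `ζ ∈ (0,1)`. -/
theorem stmt_6 (q : ℕ) (hq : 2 ≤ q) (u : ℕ → ℝ) (hu : ∀ j ∈ Finset.Icc 2 q, 0 < u j)
    (α : ℝ) (hα : 0 < α) :
    let Path : ℝ → ℝ := fun z =>
      1 / (1 - z) + ∑ j ∈ Finset.Icc 2 q, (u j - 1) * z ^ (j - 2)
    let g : ℝ → ℝ := fun z => z * deriv (fun w => Real.log (Path w)) z
    StrictMonoOn g (Ioo (0 : ℝ) 1) ∧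
    Filter.Tendsto g (nhdsWithin 0 (Ioi 0)) (nhds 0) ∧
    Filter.Tendsto g (nhdsWithin 1 (Iio 1)) Filter.atTop ∧
    ∃! ζ : ℝ, ζ ∈ Ioo (0 : ℝ) 1 ∧ g ζ = α :=
  stmt_6_general q u hu α hα
end

section
/- Let α > 0 and for 2 ≤ i, j ≤ q define H_{i,j}(α) = −(α^{i+j−4}/(1+α)^{i+j−2})·(1 + (i−2−α)(j−2−α)/(α(1+α))) + 𝟙_{i=j}·(1/(1+α))·(α/(1+α))^{i−2}. Then the matrix H(α) = (H_{i,j}(α))_{2≤i,j≤q} is symmetric and positive semi-definite. -/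
/-!
Put `t = α / (1 + α)` and `w n = t ^ n / (1 + α)`: these are the weights of the geometric law
on `ℕ` with mean `α` and variance `α (1 + α)`. With `n = i - 2`,
`H(α) = diag w - w wᵀ - u uᵀ / (α (1 + α))` where `u n = (n - α) w n`, so its quadratic form is
`∑ w x² - ⟪x, 1⟫² - ⟪x, n - α⟫² / (α (1 + α))` in `L²(w)`. Since `1` and
`(n - α) / √(α (1 + α))` are orthonormal for the full geometric law, this is Bessel's inequality;
truncating to `n < q - 1` only removes the nonnegative tail mass of the fitted function
`a + b (n - α)`.
-/

open Finset Matrix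

noncomputable def geomWeight (α : ℝ) (n : ℕ) : ℝ := (α / (1 + α)) ^ n / (1 + α)

lemma geomWeight_nonneg {α : ℝ} (hα : 0 ≤ α) (n : ℕ) : 0 ≤ geomWeight α n := by
  unfold geomWeight; positivity

lemma geomWeight_mul_geomWeight {α : ℝ} (hα : 1 + α ≠ 0) (i j : ℕ) :
    geomWeight α i * geomWeight α j = α ^ (i + j) / (1 + α) ^ (i + j + 2) := by
  simp only [geomWeight, div_pow]
  field_simp
  ring

lemma sum_range_geomWeight_mul_sq {α : ℝ} (hα : 1 + α ≠ 0) (a b : ℝ) (m : ℕ) :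
    ∑ n ∈ range m, geomWeight α n * (a + b * (n - α)) ^ 2 =
      a ^ 2 + b ^ 2 * (α * (1 + α)) -
        (α / (1 + α)) ^ m * ((a + b * m) ^ 2 + b ^ 2 * (α * (1 + α))) := by
  induction m with
  | zero => simp
  | succ m ih =>
    rw [sum_range_succ, ih, geomWeight, pow_succ (α / (1 + α)) m]
    generalize (α / (1 + α)) ^ m = u
    push_cast
    field_simp
    ring

theorem sq_sum_geomWeight_mul_add_le {α : ℝ} (hα : 0 < α) {m : ℕ} (x : Fin m → ℝ) :
    (∑ i : Fin m, geomWeight α i * x i) ^ 2 +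
        (∑ i : Fin m, geomWeight α i * (i - α) * x i) ^ 2 / (α * (1 + α)) ≤
      ∑ i : Fin m, geomWeight α i * x i ^ 2 := by
  set V := α * (1 + α)
  have hV : 0 < V := by positivity
  set a := ∑ i : Fin m, geomWeight α i * x i
  set c := ∑ i : Fin m, geomWeight α i * (i - α) * x i
  set b := c / V
  have hresidual : 0 ≤ ∑ i : Fin m, geomWeight α i * (x i - (a + b * (i - α))) ^ 2 :=
    sum_nonneg fun i _ => mul_nonneg (geomWeight_nonneg hα.le i) (sq_nonneg _)
  have hfit_sq : ∑ i : Fin m, geomWeight α i * (a + b * (i - α)) ^ 2 ≤ a ^ 2 + b ^ 2 * V := by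
    rw [Fin.sum_univ_eq_sum_range (fun n => geomWeight α n * (a + b * (n - α)) ^ 2),
      sum_range_geomWeight_mul_sq (by positivity) a b m]
    have : 0 ≤ (α / (1 + α)) ^ m * ((a + b * m) ^ 2 + b ^ 2 * V) := by positivity
    linarith
  have hfit_cross : ∑ i : Fin m, geomWeight α i * x i * (a + b * (i - α)) = a ^ 2 + b * c := by
    simp only [mul_add, sum_add_distrib]
    rw [sq, sum_mul, mul_sum]
    congr 1
    exact sum_congr rfl fun i _ => by ring
  have hexpand : ∑ i : Fin m, geomWeight α i * (x i - (a + b * (i - α))) ^ 2 =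
      ∑ i : Fin m, geomWeight α i * x i ^ 2 -
        2 * ∑ i : Fin m, geomWeight α i * x i * (a + b * (i - α)) +
        ∑ i : Fin m, geomWeight α i * (a + b * (i - α)) ^ 2 := by
    rw [mul_sum, ← sum_sub_distrib, ← sum_add_distrib]
    exact sum_congr rfl fun i _ => by ring
  have hb : b * c = c ^ 2 / V := by simp only [b]; ring
  have hbV : b ^ 2 * V = c ^ 2 / V := by simp only [b]; field_simp
  linarith

noncomputable def geomHessian (α : ℝ) (m : ℕ) : Matrix (Fin m) (Fin m) ℝ :=
  Matrix.of fun i j => (if i = j then geomWeight α i else 0) -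
    geomWeight α i * geomWeight α j * (1 + ((i : ℝ) - α) * ((j : ℝ) - α) / (α * (1 + α)))

lemma geomHessian_isSymm (α : ℝ) (m : ℕ) : (geomHessian α m).IsSymm :=
  IsSymm.ext fun i j => by
    simp only [geomHessian, of_apply, eq_comm (a := j)]
    split_ifs with h
    · subst h; ring
    · ring

lemma dotProduct_geomHessian_mulVec (α : ℝ) {m : ℕ} (x : Fin m → ℝ) :
    x ⬝ᵥ geomHessian α m *ᵥ x =
      ∑ i : Fin m, geomWeight α i * x i ^ 2 - (∑ i : Fin m, geomWeight α i * x i) ^ 2 -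
        (∑ i : Fin m, geomWeight α i * (i - α) * x i) ^ 2 / (α * (1 + α)) := by
  rw [sq, sq, sum_mul_sum, sum_mul_sum, sum_div, sub_sub, ← sum_add_distrib, ← sum_sub_distrib]
  refine sum_congr rfl fun i _ => ?_
  simp only [mulVec, dotProduct, geomHessian, of_apply, sub_mul, ite_mul, zero_mul,
    sum_sub_distrib, sum_ite_eq, mem_univ, if_true]
  rw [mul_sub, mul_sum, sum_div, ← sum_add_distrib]
  congr 1
  · ring
  · exact sum_congr rfl fun j _ => by ring

theorem geomHessian_posSemidef {α : ℝ} (hα : 0 < α) (m : ℕ) : (geomHessian α m).PosSemidef := by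
  refine .of_dotProduct_mulVec_nonneg (isHermitian_iff_isSymm.mpr (geomHessian_isSymm α m))
    fun x => ?_
  rw [star_trivial, dotProduct_geomHessian_mulVec]
  linarith [sq_sum_geomWeight_mul_add_le hα x]

theorem stmt_11_general (q : ℕ) (α : ℝ) (hα : 0 < α)
    (H : Matrix (Fin (q - 1)) (Fin (q - 1)) ℝ)
    (hH : ∀ i j : Fin (q - 1), H i j =
      -(α ^ (((i : ℕ) + 2) + ((j : ℕ) + 2) - 4) / (1 + α) ^ (((i : ℕ) + 2) + ((j : ℕ) + 2) - 2)) *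
          (1 + ((((i : ℕ) + 2 : ℝ) - 2 - α) * (((j : ℕ) + 2 : ℝ) - 2 - α)) / (α * (1 + α))) +
        (if i = j then (1 / (1 + α)) * (α / (1 + α)) ^ ((i : ℕ) + 2 - 2) else 0)) :
    H.IsSymm ∧ H.PosSemidef := by
  have hH_eq : H = geomHessian α (q - 1) := by
    ext i j
    rw [hH, geomHessian, of_apply, geomWeight_mul_geomWeight (by positivity),
      show (i : ℕ) + 2 + ((j : ℕ) + 2) - 4 = i + j by omega,
      show (i : ℕ) + 2 + ((j : ℕ) + 2) - 2 = i + j + 2 by omega, Nat.add_sub_cancel]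
    simp only [add_sub_cancel_right, geomWeight, one_div_mul_eq_div]
    ring
  exact hH_eq ▸ ⟨geomHessian_isSymm α _, geomHessian_posSemidef hα _⟩

/-- For `α > 0` and `q ≥ 2`, the matrix `H(α)` with rows and columns indexed by
`2 ≤ i, j ≤ q` (here represented by `Fin (q-1)` via `i ↦ i+2`) and entries
`H_{i,j}(α) = −(α^{i+j−4}/(1+α)^{i+j−2})(1 + (i−2−α)(j−2−α)/(α(1+α)))
+ 𝟙_{i=j}(1/(1+α))(α/(1+α))^{i−2}` is symmetric and positive semi-definite. -/
theorem stmt_11 (q : ℕ) (hq : 2 ≤ q) (α : ℝ) (hα : 0 < α)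
    (H : Matrix (Fin (q - 1)) (Fin (q - 1)) ℝ)
    (hH : ∀ i j : Fin (q - 1), H i j =
      -(α ^ (((i : ℕ) + 2) + ((j : ℕ) + 2) - 4) / (1 + α) ^ (((i : ℕ) + 2) + ((j : ℕ) + 2) - 2)) *
          (1 + ((((i : ℕ) + 2 : ℝ) - 2 - α) * (((j : ℕ) + 2 : ℝ) - 2 - α)) / (α * (1 + α))) +
        (if i = j then (1 / (1 + α)) * (α / (1 + α)) ^ ((i : ℕ) + 2 - 2) else 0)) :
    H.IsSymm ∧ H.PosSemidef :=
  stmt_11_general q α hα H hH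
end

section
/- Let φ : ℝ → ℂ be continuous on [−ε, ε] with Re φ(θ) ≥ 0 for all θ, with equality only at θ = 0, and suppose φ(θ) = c θ²/2 + O(θ³) near 0 with c > 0. Let A : [−ε,ε] → ℂ be continuous with A(θ) = A(0) + O(θ) near 0 and A(0) ≠ 0. Then ∫_{−ε}^{ε} A(θ) e^{−nφ(θ)} dθ = √(2π) A(0)/√(n c) · (1 + o(1)) as n → ∞. -/
/-!
Substituting `θ = t / √n` turns `√n ∫_{-ε}^{ε} A(θ) e^{-nφ(θ)} dθ` into the integral over `ℝ` of
`A(t/√n) e^{-nφ(t/√n)}` restricted to `|t| ≤ ε√n`. The expansion of `φ` at `0` gives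
`nφ(t/√n) → ct²/2` pointwise; combined with `Re φ > 0` away from `0` and compactness of
`[-ε, ε]` it also gives `Re φ(θ) ≥ aθ²` for some `a > 0`, so the integrands are dominated by
`(sup |A|) e^{-at²}`. Dominated convergence yields the limit `A(0) ∫ e^{-ct²/2} = A(0) √(2π/c)`.
-/

open Real Filter intervalIntegral
open Topology MeasureTheory Asymptotics Set
open scoped Complex

lemma isLittleO_sq_of_isBigO_abs_cube {E : Type*} [Norm E] {g : ℝ → E}
    (h : g =O[𝓝 0] fun θ : ℝ => |θ| ^ 3) : g =o[𝓝 0] fun θ : ℝ => θ ^ 2 :=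
  h.trans_isLittleO <| by
    simpa using (isLittleO_pow_pow (𝕜 := ℝ) (show 2 < 3 by norm_num)).norm_left

lemma eventually_mul_sq_le_re {φ : ℝ → ℂ} {c : ℝ} (hc : 0 < c)
    (hφ : (fun θ : ℝ => φ θ - (c : ℂ) * θ ^ 2 / 2) =o[𝓝 0] fun θ : ℝ => θ ^ 2) :
    ∀ᶠ θ in 𝓝 0, c / 4 * θ ^ 2 ≤ (φ θ).re := by
  filter_upwards [hφ.bound (by positivity : 0 < c / 4)] with θ hθ
  have hre : (φ θ - (c : ℂ) * θ ^ 2 / 2).re = (φ θ).re - c * θ ^ 2 / 2 := by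
    simp [← Complex.ofReal_pow]
  have hle := (Complex.abs_re_le_norm _).trans hθ
  rw [hre, norm_pow, Real.norm_eq_abs, sq_abs] at hle
  linarith [(abs_le.1 hle).1]

lemma IsCompact.exists_pos_mul_sq_le {s : Set ℝ} {f : ℝ → ℝ} (hs : IsCompact s)
    (hf : ContinuousOn f s) (hpos : ∀ x ∈ s, x ≠ 0 → 0 < f x) {b : ℝ} (hb : 0 < b)
    (hloc : ∀ᶠ x in 𝓝 0, b * x ^ 2 ≤ f x) : ∃ a > 0, ∀ x ∈ s, a * x ^ 2 ≤ f x := by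
  obtain ⟨δ, hδ, hball⟩ := Metric.eventually_nhds_iff_ball.1 hloc
  have hne : ∀ x ∈ s \ Metric.ball 0 δ, x ≠ 0 := fun x hx h0 =>
    hx.2 (h0 ▸ Metric.mem_ball_self hδ)
  obtain ⟨m, hm, hmf⟩ := (hs.diff Metric.isOpen_ball).exists_forall_le'
    (f := fun x => f x / x ^ 2)
    ((hf.mono sdiff_subset).div (continuousOn_pow 2) fun x hx => pow_ne_zero 2 (hne x hx))
    fun x hx => div_pos (hpos x hx.1 (hne x hx)) (by have := hne x hx; positivity)
  refine ⟨min b m, lt_min hb hm, fun x hx => ?_⟩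
  by_cases hxδ : x ∈ Metric.ball 0 δ
  · exact (mul_le_mul_of_nonneg_right (min_le_left _ _) (sq_nonneg x)).trans (hball x hxδ)
  · have hx0 := hne x ⟨hx, hxδ⟩
    have := hmf x ⟨hx, hxδ⟩
    rw [le_div_iff₀ (by positivity)] at this
    exact (mul_le_mul_of_nonneg_right (min_le_right _ _) (sq_nonneg x)).trans this

lemma tendsto_div_sqrt_natCast_nhds_zero (t : ℝ) :
    Tendsto (fun n : ℕ => t / √n) atTop (𝓝 0) :=
  tendsto_const_nhds.div_atTop (tendsto_sqrt_atTop.comp tendsto_natCast_atTop_atTop)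

lemma mul_div_sqrt_sq {x : ℝ} (hx : 0 < x) (t : ℝ) : x * (t / √x) ^ 2 = t ^ 2 := by
  rw [div_pow, sq_sqrt hx.le]
  field_simp

lemma tendsto_natCast_mul_comp_div_sqrt {φ : ℝ → ℂ} {c : ℝ}
    (hφ : (fun θ : ℝ => φ θ - (c : ℂ) * θ ^ 2 / 2) =o[𝓝 0] fun θ : ℝ => θ ^ 2) (t : ℝ) :
    Tendsto (fun n : ℕ => (n : ℂ) * φ (t / √n)) atTop (𝓝 ((c * t ^ 2 / 2 : ℝ) : ℂ)) := by
  have hθ := tendsto_div_sqrt_natCast_nhds_zero t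
  -- the remainder is `o((t/√n)^2)`, and `n (t/√n)^2 = t^2` is bounded
  have hrem : Tendsto (fun n : ℕ => (n : ℂ) * (φ (t / √n) - c * ((t / √n : ℝ) : ℂ) ^ 2 / 2))
      atTop (𝓝 0) := by
    have hO : (fun n : ℕ => (n : ℝ) * (t / √n) ^ 2) =O[atTop] fun _ => (1 : ℝ) := by
      refine (isBigO_const_const (t ^ 2) one_ne_zero atTop).congr' ?_ EventuallyEq.rfl
      filter_upwards [eventually_gt_atTop 0] with n hn
      exact (mul_div_sqrt_sq (Nat.cast_pos.2 hn) t).symm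
    refine (isLittleO_one_iff ℝ).1 (((isBigO_of_le atTop fun n : ℕ => ?_).mul_isLittleO
      (hφ.comp_tendsto hθ)).trans_isBigO hO)
    simp
  have hlim := hrem.const_add ((c * t ^ 2 / 2 : ℝ) : ℂ)
  rw [add_zero] at hlim
  refine hlim.congr' ?_
  filter_upwards [eventually_gt_atTop 0] with n hn
  have h := congrArg (fun x : ℝ => ((x : ℝ) : ℂ)) (mul_div_sqrt_sq (Nat.cast_pos.2 hn) t)
  push_cast at h ⊢
  linear_combination -(c / 2 : ℂ) * h

lemma smul_intervalIntegral_eq_integral_indicator_comp_div {E : Type*} [NormedAddCommGroup E]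
    [NormedSpace ℝ E] (f : ℝ → E) {ε s : ℝ} (hε : 0 ≤ ε) (hs : 0 ≤ s) :
    s • ∫ θ in (-ε)..ε, f θ = ∫ t, (Icc (-ε) ε).indicator f (t / s) := by
  rw [Measure.integral_comp_div, abs_of_nonneg hs,
    MeasureTheory.integral_indicator measurableSet_Icc, integral_Icc_eq_integral_Ioc,
    intervalIntegral.integral_of_le (by linarith)]

lemma integral_cexp_neg_mul_sq_div_two (c : ℝ) :
    ∫ t : ℝ, cexp (-((c * t ^ 2 / 2 : ℝ) : ℂ)) = √(π / (c / 2)) := by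
  have h : ∀ t : ℝ, cexp (-((c * t ^ 2 / 2 : ℝ) : ℂ)) = ((rexp (-(c / 2) * t ^ 2) : ℝ) : ℂ) := by
    intro t
    rw [Complex.ofReal_exp]
    push_cast
    ring_nf
  rw [integral_congr_ae (ae_of_all _ h), integral_complex_ofReal, integral_gaussian]

theorem tendsto_sqrt_mul_integral_mul_cexp {ε a c : ℝ} {φ A : ℝ → ℂ} (hε : 0 < ε)
    (hφcont : ContinuousOn φ (Icc (-ε) ε)) (hAcont : ContinuousOn A (Icc (-ε) ε))
    (ha : 0 < a) (hlow : ∀ θ ∈ Icc (-ε) ε, a * θ ^ 2 ≤ (φ θ).re)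
    (hφ : (fun θ : ℝ => φ θ - (c : ℂ) * θ ^ 2 / 2) =o[𝓝 0] fun θ : ℝ => θ ^ 2) :
    Tendsto (fun n : ℕ => (√n : ℂ) * ∫ θ in (-ε)..ε, A θ * cexp (-(n : ℂ) * φ θ)) atTop
      (𝓝 (A 0 * √(π / (c / 2)))) := by
  set F : ℕ → ℝ → ℂ := fun n t =>
    (Icc (-ε) ε).indicator (fun θ => A θ * cexp (-(n : ℂ) * φ θ)) (t / √n)
  have hIcc : Icc (-ε) ε ∈ 𝓝 (0 : ℝ) := Icc_mem_nhds (by linarith) hε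
  obtain ⟨M, hM⟩ := isCompact_Icc.exists_bound_of_continuousOn hAcont
  have hM0 : 0 ≤ M := (norm_nonneg _).trans (hM 0 (mem_of_mem_nhds hIcc))
  have hmeas : ∀ n, AEStronglyMeasurable (F n) volume := fun n => by
    have hcont : ContinuousOn (fun θ => A θ * cexp (-(n : ℂ) * φ θ)) (Icc (-ε) ε) :=
      hAcont.mul (Complex.continuous_exp.comp_continuousOn (continuousOn_const.mul hφcont))
    have hm := (hcont.measurable_piecewise continuous_zero.continuousOn measurableSet_Icc).comp
      (measurable_id.div_const √n)
    rw [piecewise_eq_indicator] at hm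
    exact hm.aestronglyMeasurable
  have hbound : ∀ᶠ n : ℕ in atTop, ∀ t, ‖F n t‖ ≤ M * rexp (-a * t ^ 2) := by
    filter_upwards [eventually_gt_atTop 0] with n hn t
    have hn' : (0 : ℝ) < n := Nat.cast_pos.2 hn
    by_cases ht : t / √n ∈ Icc (-ε) ε
    · simp only [F]
      rw [indicator_of_mem ht, norm_mul, Complex.norm_exp]
      have hre := mul_le_mul_of_nonneg_left (hlow _ ht) hn'.le
      rw [mul_left_comm, mul_div_sqrt_sq hn'] at hre
      gcongr
      · exact hM _ ht
      · simp only [neg_mul, Complex.neg_re, Complex.re_ofReal_mul, ← Complex.ofReal_natCast]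
        linarith
    · simp only [F]
      rw [indicator_of_notMem ht, norm_zero]
      positivity
  have hlim : ∀ t : ℝ, Tendsto (fun n => F n t) atTop
      (𝓝 (A 0 * cexp (-((c * t ^ 2 / 2 : ℝ) : ℂ)))) := by
    intro t
    have hθ := tendsto_div_sqrt_natCast_nhds_zero t
    refine (((hAcont.continuousAt hIcc).tendsto.comp hθ).mul
      ((Complex.continuous_exp.tendsto _).comp
        (tendsto_natCast_mul_comp_div_sqrt hφ t).neg)).congr' ?_
    filter_upwards [hθ hIcc] with n hn
    simp only [F, indicator_of_mem (show t / √n ∈ Icc (-ε) ε from hn), Function.comp_apply,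
      neg_mul]
  have hDCT := tendsto_integral_filter_of_dominated_convergence _
    (Eventually.of_forall hmeas) (hbound.mono fun n hn => ae_of_all _ hn)
    ((integrable_exp_neg_mul_sq ha).const_mul M) (ae_of_all _ hlim)
  rw [MeasureTheory.integral_const_mul, integral_cexp_neg_mul_sq_div_two] at hDCT
  refine hDCT.congr fun n => ?_
  simp only [F]
  rw [← smul_intervalIntegral_eq_integral_indicator_comp_div _ hε.le (sqrt_nonneg _),
    Complex.real_smul]

theorem stmt_15_general (ε : ℝ) (hε : 0 < ε) (c : ℝ) (hc : 0 < c) (φ A : ℝ → ℂ)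
    (hφcont : ContinuousOn φ (Set.Icc (-ε) ε))
    (hφre : ∀ θ ∈ Set.Icc (-ε) ε, 0 ≤ (φ θ).re)
    (hφzero : ∀ θ ∈ Set.Icc (-ε) ε, (φ θ).re = 0 → θ = 0)
    (hφtaylor : (fun θ : ℝ => φ θ - (c : ℂ) * θ ^ 2 / 2) =O[nhds 0] fun θ : ℝ => |θ| ^ 3)
    (hAcont : ContinuousOn A (Set.Icc (-ε) ε))
    (hA0 : A 0 ≠ 0) :
    Tendsto (fun n : ℕ =>
        (∫ θ in (-ε)..ε, A θ * Complex.exp (-(n : ℂ) * φ θ)) *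
          (Real.sqrt ((n : ℝ) * c) : ℂ) / ((Real.sqrt (2 * π) : ℂ) * A 0))
      atTop (nhds 1) := by
  have hφ := isLittleO_sq_of_isBigO_abs_cube hφtaylor
  obtain ⟨a, ha, hlow⟩ := isCompact_Icc.exists_pos_mul_sq_le (f := fun θ => (φ θ).re)
    (Complex.continuous_re.comp_continuousOn hφcont)
    (fun θ hθ hθ0 => (hφre θ hθ).lt_of_ne fun h => hθ0 (hφzero θ hθ h.symm))
    (by positivity : 0 < c / 4) (eventually_mul_sq_le_re hc hφ)
  have hlim := (tendsto_sqrt_mul_integral_mul_cexp hε hφcont hAcont ha hlow hφ).mul_const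
    ((√c : ℂ) / ((√(2 * π) : ℂ) * A 0))
  have hsqrt : √(π / (c / 2)) * √c = √(2 * π) := by
    rw [← sqrt_mul (by positivity)]
    congr 1
    field_simp
  have h2π : (√(2 * π) : ℂ) ≠ 0 := by exact_mod_cast (sqrt_pos.2 (by positivity)).ne'
  have hval : A 0 * (√(π / (c / 2)) : ℂ) * ((√c : ℂ) / ((√(2 * π) : ℂ) * A 0)) = 1 :=
    calc _ = ((√(π / (c / 2)) * √c : ℝ) : ℂ) / (√(2 * π) : ℂ) * (A 0 / A 0) := by push_cast; ring
      _ = 1 := by rw [hsqrt, div_self h2π, div_self hA0, one_mul]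
  rw [hval] at hlim
  refine hlim.congr fun n => ?_
  rw [sqrt_mul (Nat.cast_nonneg n)]
  push_cast
  ring

/-- Laplace method. Let `φ : ℝ → ℂ` be continuous on `[−ε,ε]` with `Re φ ≥ 0`,
vanishing only at `0`, and `φ(θ) = cθ²/2 + O(θ³)` near `0` with `c > 0`; let
`A : ℝ → ℂ` be continuous on `[−ε,ε]` with `A(θ) = A(0) + O(θ)` and `A(0) ≠ 0`.
Then `∫_{−ε}^{ε} A(θ)e^{−nφ(θ)} dθ = √(2π)·A(0)/√(nc)·(1+o(1))` as `n → ∞`. -/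
theorem stmt_15 (ε : ℝ) (hε : 0 < ε) (c : ℝ) (hc : 0 < c) (φ A : ℝ → ℂ)
    (hφcont : ContinuousOn φ (Set.Icc (-ε) ε))
    (hφre : ∀ θ ∈ Set.Icc (-ε) ε, 0 ≤ (φ θ).re)
    (hφzero : ∀ θ ∈ Set.Icc (-ε) ε, (φ θ).re = 0 → θ = 0)
    (hφtaylor : (fun θ : ℝ => φ θ - (c : ℂ) * θ ^ 2 / 2) =O[nhds 0] fun θ : ℝ => |θ| ^ 3)
    (hAcont : ContinuousOn A (Set.Icc (-ε) ε))
    (hAtaylor : (fun θ : ℝ => A θ - A 0) =O[nhds 0] fun θ : ℝ => θ)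
    (hA0 : A 0 ≠ 0) :
    Tendsto (fun n : ℕ =>
        (∫ θ in (-ε)..ε, A θ * Complex.exp (-(n : ℂ) * φ θ)) *
          (Real.sqrt ((n : ℝ) * c) : ℂ) / ((Real.sqrt (2 * π) : ℂ) * A 0))
      atTop (nhds 1) :=
  stmt_15_general ε hε c hc φ A hφcont hφre hφzero hφtaylor hAcont hA0
end
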